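/- arXiv:2001.09305 — 2 statements merged into one kernel-verified Lean document; each statement's English description precedes it below -/
import Mathlib

section
/- Let m₁ be a positive integer and c a real number such that (i − c)^{m₁} is purely imaginary (i.e., its real part is 0) and nonzero. Then there exists k ∈ {0, 1, …, m₁−1} with c = cot(π(2k+1)/(2m₁)). -/
/-! Writing `c = cot φ` with `φ ∈ (0, π)`, one has `i - c = -e^{-iφ} / sin φ`, so the real part of
`(i - c)^m` is `(-1)^m cos (m φ) / sin^m φ`. It vanishes exactly when `m φ` is an odd multiple of
`π / 2`, and `0 < m φ < m π` leaves the odd multiples `(2k + 1) π / 2` with `k < m`. -/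

open Real

theorem Real.cot_pi_div_two_sub_arctan (c : ℝ) : cot (π / 2 - arctan c) = c := by
  rw [cot_eq_cos_div_sin, cos_pi_div_two_sub, sin_pi_div_two_sub, ← tan_eq_sin_div_cos,
    tan_arctan]

theorem Real.I_sub_cot_eq_mul_exp {φ : ℝ} (hφ : sin φ ≠ 0) :
    Complex.I - (cot φ : ℂ) = (-1 / sin φ : ℝ) * Complex.exp ((-φ : ℝ) * Complex.I) := by
  have hφ' : Complex.sin φ ≠ 0 := by exact_mod_cast hφ
  rw [Complex.exp_mul_I, cot_eq_cos_div_sin]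
  push_cast
  rw [Complex.cos_neg, Complex.sin_neg]
  field_simp
  ring_nf

theorem Real.re_I_sub_cot_pow {φ : ℝ} (hφ : sin φ ≠ 0) (m : ℕ) :
    ((Complex.I - (cot φ : ℂ)) ^ m).re = (-1) ^ m * cos (m * φ) / sin φ ^ m := by
  have hangle : (m : ℂ) * ((-φ : ℝ) * Complex.I) = ((-(m * φ) : ℝ) : ℂ) * Complex.I := by
    push_cast
    ring
  rw [I_sub_cot_eq_mul_exp hφ, mul_pow, ← Complex.exp_nat_mul, ← Complex.ofReal_pow, hangle,
    Complex.re_ofReal_mul, Complex.exp_ofReal_mul_I_re, cos_neg, div_pow]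
  ring

theorem Real.exists_eq_odd_mul_pi_div_of_cos_nat_mul_eq_zero {φ : ℝ} (h0 : 0 < φ) (hπ : φ < π)
    {m : ℕ} (h : cos (m * φ) = 0) :
    ∃ k : ℕ, k < m ∧ φ = π * (2 * k + 1) / (2 * m) := by
  obtain ⟨j, hj⟩ := cos_eq_zero_iff.mp h
  have hmφ : 0 ≤ (m : ℝ) * φ := by positivity
  have hmφ_le : (m : ℝ) * φ ≤ m * π := mul_le_mul_of_nonneg_left hπ.le m.cast_nonneg
  have hj_nonneg : 0 ≤ j := by
    have : (0 : ℝ) ≤ 2 * j + 1 := by nlinarith [pi_pos]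
    have : (0 : ℤ) ≤ 2 * j + 1 := by exact_mod_cast this
    omega
  have hj_lt : j < m := by
    have : (2 * j + 1 : ℝ) ≤ 2 * m := by nlinarith [pi_pos]
    have : (2 * j + 1 : ℤ) ≤ 2 * m := by exact_mod_cast this
    omega
  refine ⟨j.toNat, by omega, ?_⟩
  have hm : (m : ℝ) ≠ 0 := by norm_cast; omega
  rw [show ((j.toNat : ℕ) : ℝ) = j by exact_mod_cast Int.toNat_of_nonneg hj_nonneg]
  field_simp
  linarith

theorem stmt1_general (m₁ : ℕ) (c : ℝ)
    (hre : ((Complex.I - (c : ℂ)) ^ m₁).re = 0) :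
    ∃ k : ℕ, k < m₁ ∧ c = Real.cot (π * (2 * k + 1) / (2 * m₁)) := by
  set φ := π / 2 - arctan c with hφ
  have hφ0 : 0 < φ := by rw [hφ]; linarith [arctan_lt_pi_div_two c]
  have hφπ : φ < π := by rw [hφ]; linarith [neg_pi_div_two_lt_arctan c]
  have hsin : sin φ ≠ 0 := (sin_pos_of_pos_of_lt_pi hφ0 hφπ).ne'
  have hcos : cos (m₁ * φ) = 0 := by
    rw [← cot_pi_div_two_sub_arctan c, re_I_sub_cot_pow hsin] at hre
    simpa [hsin] using hre
  obtain ⟨k, hk, hφk⟩ := exists_eq_odd_mul_pi_div_of_cos_nat_mul_eq_zero hφ0 hφπ hcos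
  exact ⟨k, hk, by rw [← hφk, cot_pi_div_two_sub_arctan]⟩

theorem stmt1 (m₁ : ℕ) (hm : 0 < m₁) (c : ℝ)
    (hre : ((Complex.I - (c : ℂ)) ^ m₁).re = 0)
    (hne : (Complex.I - (c : ℂ)) ^ m₁ ≠ 0) :
    ∃ k : ℕ, k < m₁ ∧ c = Real.cot (π * (2 * k + 1) / (2 * m₁)) :=
  stmt1_general m₁ c hre
end

section
/- For a positive integer d and real β, (i − β)^d ∈ i·ℝ* if and only if β = cot(π(2k+1)/(2d)) for some k ∈ {0,…,d−1}. -/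
open Real

theorem stmt18 (d : ℕ) (hd : 0 < d) (β : ℝ) :
    (((Complex.I - (β : ℂ)) ^ d).re = 0 ∧ (Complex.I - (β : ℂ)) ^ d ≠ 0) ↔
      ∃ k : ℕ, k < d ∧ β = Real.cot (π * (2 * k + 1) / (2 * d)) := by
  set z : ℂ := Complex.I - (β : ℂ) with hz
  have hzre : z.re = -β := by simp [hz]
  have hzim : z.im = 1 := by simp [hz]
  have hzne : z ≠ 0 := by
    intro h; rw [h] at hzim; simp at hzim
  have hr : 0 < ‖z‖ := norm_pos_iff.mpr hzne
  have hdR : (0:ℝ) < d := by exact_mod_cast hd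
  set θ := Complex.arg z with hθdef
  have hθ2 : θ < π := Complex.arg_lt_pi_iff.2 (Or.inr (by rw [hzim]; norm_num))
  have hθ1 : 0 < θ := by
    by_contra h
    push_neg at h
    have h2 := Real.sin_nonpos_of_nonpos_of_neg_pi_le h (Complex.neg_pi_lt_arg z).le
    rw [Complex.sin_arg, hzim] at h2
    have : (0:ℝ) < 1 / ‖z‖ := by positivity
    linarith
  have hsinθ : Real.sin θ > 0 := Real.sin_pos_of_pos_of_lt_pi hθ1 hθ2
  have hexp_re : ∀ x : ℝ, (Complex.exp ((x : ℂ) * Complex.I)).re = Real.cos x := by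
    intro x
    rw [Complex.exp_mul_I]
    simp [Complex.cos_ofReal_re]
  have hre : (z ^ d).re = ‖z‖ ^ d * Real.cos (d * θ) := by
    conv_lhs => rw [← Complex.norm_mul_exp_arg_mul_I z]
    rw [mul_pow, ← Complex.exp_nat_mul]
    have h1 : ((d : ℂ) * ((Complex.arg z : ℂ) * Complex.I)) =
        ((d * θ : ℝ) : ℂ) * Complex.I := by
      rw [hθdef]; push_cast; ring
    rw [h1]
    have h2 : ((‖z‖ : ℂ)) ^ d = (((‖z‖ ^ d : ℝ)) : ℂ) := by push_cast; ring
    rw [h2, Complex.re_ofReal_mul, hexp_re]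
  have hne : (z : ℂ) ^ d ≠ 0 := pow_ne_zero d hzne
  have hcot : Real.cot θ = -β := by
    rw [hθdef, Real.cot_eq_cos_div_sin, Complex.cos_arg hzne, Complex.sin_arg, hzre, hzim]
    field_simp
  constructor
  · rintro ⟨h0, -⟩
    rw [hre] at h0
    have hcos : Real.cos (d * θ) = 0 := by
      have : ‖z‖ ^ d ≠ 0 := by positivity
      exact (mul_eq_zero.1 h0).resolve_left this
    obtain ⟨n, hn⟩ := Real.cos_eq_zero_iff.1 hcos
    have hb1 : (0:ℝ) < (2 * n + 1) * π / 2 := by rw [← hn]; positivity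
    have hb2 : (2 * (n:ℝ) + 1) * π / 2 < d * π := by
      rw [← hn]
      have := mul_lt_mul_of_pos_left hθ2 hdR
      linarith
    have hn0 : 0 ≤ n := by
      by_contra h
      push_neg at h
      have : (n:ℝ) ≤ -1 := by exact_mod_cast Int.le_of_lt_add_one (by exact_mod_cast h)
      nlinarith [Real.pi_pos]
    have hnd : n < d := by
      by_contra h
      push_neg at h
      have : (d:ℝ) ≤ (n:ℝ) := by exact_mod_cast h
      nlinarith [Real.pi_pos]
    set m : ℕ := n.toNat with hm
    have hmn : (m : ℝ) = (n : ℝ) := by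
      rw [hm]; exact_mod_cast congrArg Int.cast (Int.toNat_of_nonneg hn0)
    have hmd : m < d := by
      have : (n.toNat : ℤ) < d := by rwa [Int.toNat_of_nonneg hn0]
      exact_mod_cast this
    refine ⟨d - 1 - m, by omega, ?_⟩
    have hkcast : ((d - 1 - m : ℕ) : ℝ) = (d : ℝ) - 1 - m := by
      have h1 : d - 1 - m = d - (1 + m) := by omega
      rw [h1, Nat.cast_sub (by omega)]
      push_cast
      ring
    have hθval : θ = (2 * (m:ℝ) + 1) * π / (2 * d) := by
      have h3 : (d:ℝ) * θ = (2 * n + 1) * π / 2 := hn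
      rw [← hmn] at h3
      field_simp at h3 ⊢
      linarith
    have hang : π * (2 * ((d - 1 - m : ℕ) : ℝ) + 1) / (2 * d) = π - θ := by
      rw [hkcast, hθval]
      field_simp
      ring
    rw [hang, Real.cot_eq_cos_div_sin, Real.cos_pi_sub, Real.sin_pi_sub, neg_div,
      ← Real.cot_eq_cos_div_sin, hcot, neg_neg]
  · rintro ⟨k, hk, hβ⟩
    refine ⟨?_, hne⟩
    set φ : ℝ := π * (2 * k + 1) / (2 * d) with hφ
    have hφ1 : 0 < φ := by
      rw [hφ]; positivity
    have hφ2 : φ < π := by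
      rw [hφ, div_lt_iff₀ (by positivity)]
      have hkd : (k:ℝ) + 1 ≤ d := by exact_mod_cast hk
      nlinarith [Real.pi_pos]
    have hsinφ : 0 < Real.sin φ := Real.sin_pos_of_pos_of_lt_pi hφ1 hφ2
    have hzdec : z = ((1 / Real.sin φ : ℝ) : ℂ) *
        ((Real.cos (π - φ) : ℂ) + (Real.sin (π - φ) : ℂ) * Complex.I) := by
      apply Complex.ext
      · simp only [Complex.mul_re, Complex.ofReal_re, Complex.ofReal_im, Complex.add_re,
          Complex.add_im, Complex.mul_re, Complex.mul_im, Complex.I_re, Complex.I_im, hzre,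
          Real.cos_pi_sub, Real.sin_pi_sub]
        rw [hβ, Real.cot_eq_cos_div_sin]
        field_simp
        ring
      · simp only [Complex.mul_im, Complex.ofReal_re, Complex.ofReal_im, Complex.add_re,
          Complex.add_im, Complex.mul_re, Complex.I_re, Complex.I_im, hzim,
          Real.cos_pi_sub, Real.sin_pi_sub]
        field_simp
        ring
    have harg : θ = π - φ := by
      rw [hθdef, hzdec, Complex.arg_real_mul _ (by positivity),
        Complex.ofReal_cos, Complex.ofReal_sin]
      exact Complex.arg_cos_add_sin_mul_I ⟨by linarith [Real.pi_pos], by linarith⟩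
    rw [hre, harg]
    have key : (d:ℝ) * (π - φ) = (2 * (((d:ℤ) - (k:ℤ) - 1 : ℤ) : ℝ) + 1) * π / 2 := by
      rw [hφ]
      field_simp
      push_cast
      ring
    rw [key, Real.cos_eq_zero_iff.2 ⟨(d:ℤ) - k - 1, rfl⟩, mul_zero]
end
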